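/- arXiv:1604.05116 — 3 statements merged into one kernel-verified Lean document; each statement's English description precedes it below -/
import Mathlib

section
/- Suppose X has a coarser second countable (Tychonoff) topology, and every bijection φ from X onto a separable metrizable space Y with φ⁻¹(U) a Z_σ-set of X for each open U ⊆ Y is such that Y has property γ. Then B₁(X) with the pointwise topology is strongly sequentially separable. -/
open Set Filter Topology TopologicalSpace

def IsZeroSet {X : Type*} [TopologicalSpace X] (Z : Set X) : Prop :=
  ∃ f : X → ℝ, Continuous f ∧ Z = f ⁻¹' {0}

def IsZSigmaSet {X : Type*} [TopologicalSpace X] (Z : Set X) : Prop :=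
  ∃ F : ℕ → Set X, (∀ n, IsZeroSet (F n)) ∧ Z = ⋃ n, F n

def IsFSigmaSet {X : Type*} [TopologicalSpace X] (Z : Set X) : Prop :=
  ∃ F : ℕ → Set X, (∀ n, IsClosed (F n)) ∧ Z = ⋃ n, F n

/-- A function of the first Baire class: a pointwise limit of continuous functions. -/
def IsBaire1 {X : Type*} [TopologicalSpace X] (f : X → ℝ) : Prop :=
  ∃ g : ℕ → X → ℝ, (∀ n, Continuous (g n)) ∧
    ∀ x, Tendsto (fun n => g n x) atTop (𝓝 (f x))

/-- `B₁(X)` with the pointwise topology is sequentially separable: there is a countable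
set of Baire-one functions such that every Baire-one function is a pointwise limit of a
sequence from it. -/
def B1SeqSeparable (X : Type*) [TopologicalSpace X] : Prop :=
  ∃ S : Set (X → ℝ), S.Countable ∧ (∀ f ∈ S, IsBaire1 f) ∧
    ∀ f : X → ℝ, IsBaire1 f → ∃ u : ℕ → X → ℝ, (∀ n, u n ∈ S) ∧
      ∀ x, Tendsto (fun n => u n x) atTop (𝓝 (f x))
/-- Strongly sequentially separable: separable, and every countable dense subset is
sequentially dense. -/
def StronglySeqSeparable (T : Type*) [TopologicalSpace T] : Prop :=
  (∃ D : Set T, D.Countable ∧ Dense D) ∧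
    ∀ D : Set T, D.Countable → Dense D →
      ∀ x : T, ∃ u : ℕ → T, (∀ n, u n ∈ D) ∧ Filter.Tendsto u Filter.atTop (𝓝 x)

/-- Property `γ`: every open `ω`-cover has a subsequence whose `lim inf` is the whole
space. -/
def HasPropertyGamma (Y : Type*) [TopologicalSpace Y] : Prop :=
  ∀ α : Set (Set Y), (∀ U ∈ α, IsOpen U) →
    (∀ F : Set Y, F.Finite → ∃ U ∈ α, F ⊆ U) →
    ∃ u : ℕ → Set Y, (∀ n, u n ∈ α) ∧ ∀ y : Y, ∀ᶠ n in Filter.atTop, y ∈ u n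


section ZAux
variable {X : Type*} [TopologicalSpace X]

lemma isZeroSet_univ : IsZeroSet (univ : Set X) :=
  ⟨fun _ => 0, continuous_const, by ext x; simp⟩

lemma isZeroSet_empty : IsZeroSet (∅ : Set X) :=
  ⟨fun _ => 1, continuous_const, by ext x; simp⟩

lemma IsZeroSet.inter {A B : Set X} (hA : IsZeroSet A) (hB : IsZeroSet B) :
    IsZeroSet (A ∩ B) := by
  obtain ⟨f, hf, rfl⟩ := hA
  obtain ⟨g, hg, rfl⟩ := hB
  refine ⟨fun x => |f x| + |g x|, by continuity, ?_⟩
  ext x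
  simp only [mem_inter_iff, mem_preimage, mem_singleton_iff]
  constructor
  · rintro ⟨h1, h2⟩; simp [h1, h2]
  · intro h
    have h1 : |f x| = 0 ∧ |g x| = 0 := by
      constructor <;> nlinarith [abs_nonneg (f x), abs_nonneg (g x)]
    exact ⟨abs_eq_zero.mp h1.1, abs_eq_zero.mp h1.2⟩

lemma isZeroSet_iInter (Z : ℕ → Set X) (h : ∀ n, IsZeroSet (Z n)) :
    IsZeroSet (⋂ n, Z n) := by
  choose f hf hZ using h
  set F : X → ℝ := fun x => ∑' n, (1/2 : ℝ)^n * min |f n x| 1 with hF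
  have hterm_nonneg : ∀ n x, 0 ≤ (1/2 : ℝ)^n * min |f n x| 1 := fun n x =>
    mul_nonneg (by positivity) (le_min (abs_nonneg _) one_pos.le)
  have hterm_le : ∀ n x, (1/2 : ℝ)^n * min |f n x| 1 ≤ (1/2)^n := fun n x => by
    have : min |f n x| 1 ≤ 1 := min_le_right _ _
    nlinarith [hterm_nonneg n x, pow_pos (by norm_num : (0:ℝ) < 1/2) n]
  have hgeo : Summable (fun n : ℕ => (1/2 : ℝ)^n) :=
    summable_geometric_of_lt_one (by norm_num) (by norm_num)
  have hsum : ∀ x, Summable (fun n => (1/2 : ℝ)^n * min |f n x| 1) := fun x =>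
    Summable.of_nonneg_of_le (hterm_nonneg · x) (hterm_le · x) hgeo
  refine ⟨F, ?_, ?_⟩
  · refine continuous_tsum (fun n => ?_) hgeo (fun n x => ?_)
    · exact continuous_const.mul (((hf n).abs).min continuous_const)
    · rw [Real.norm_eq_abs, abs_of_nonneg (hterm_nonneg n x)]
      exact hterm_le n x
  · ext x
    simp only [mem_iInter, mem_preimage, mem_singleton_iff]
    constructor
    · intro hx
      have : ∀ n, (1/2 : ℝ)^n * min |f n x| 1 = 0 := by
        intro n
        have : x ∈ Z n := hx n
        rw [hZ n] at this
        simp only [mem_preimage, mem_singleton_iff] at this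
        simp [this]
      simp only [hF]
      rw [tsum_congr this, tsum_zero]
    · intro hx n
      rw [hZ n]
      simp only [mem_preimage, mem_singleton_iff]
      by_contra hne
      have hpos : 0 < (1/2 : ℝ)^n * min |f n x| 1 := by
        apply mul_pos (by positivity)
        exact lt_min (abs_pos.mpr hne) one_pos
      have := Summable.le_tsum (hsum x) n (fun j _ => hterm_nonneg j x)
      rw [hF] at hx
      linarith

lemma isZeroSet_le {g : X → ℝ} (hg : Continuous g) (r : ℝ) :
    IsZeroSet {x | g x ≤ r} := by
  refine ⟨fun x => max (g x - r) 0, by continuity, ?_⟩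
  ext x
  simp only [mem_setOf_eq, mem_preimage, mem_singleton_iff]
  constructor
  · intro h; exact max_eq_right (by linarith)
  · intro h
    have := le_max_left (g x - r) 0
    rw [h] at this; linarith

lemma isZeroSet_ge {g : X → ℝ} (hg : Continuous g) (r : ℝ) :
    IsZeroSet {x | r ≤ g x} := by
  have := isZeroSet_le (hg.neg) (-r)
  convert this using 1
  ext x; simp

lemma IsZeroSet.isZSigmaSet {A : Set X} (h : IsZeroSet A) : IsZSigmaSet A :=
  ⟨fun _ => A, fun _ => h, (iUnion_const A).symm⟩

lemma isZSigmaSet_empty : IsZSigmaSet (∅ : Set X) :=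
  isZeroSet_empty.isZSigmaSet

lemma isZSigmaSet_iUnion {ι : Type*} [Countable ι] (A : ι → Set X)
    (h : ∀ i, IsZSigmaSet (A i)) : IsZSigmaSet (⋃ i, A i) := by
  cases isEmpty_or_nonempty ι with
  | inl hempty =>
    have : (⋃ i, A i) = (∅ : Set X) := by simp
    rw [this]; exact isZSigmaSet_empty
  | inr hne =>
    obtain ⟨g, hg⟩ := exists_surjective_nat ι
    choose F hF hAF using fun i => h i
    refine ⟨fun n => F (g (Nat.pairEquiv.symm n).1) (Nat.pairEquiv.symm n).2,
      fun n => hF _ _, ?_⟩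
    ext x
    simp only [mem_iUnion]
    constructor
    · rintro ⟨i, hx⟩
      obtain ⟨n, rfl⟩ := hg i
      rw [hAF] at hx
      simp only [mem_iUnion] at hx
      obtain ⟨k, hk⟩ := hx
      exact ⟨Nat.pairEquiv (n, k), by simp [Nat.pairEquiv]; simpa using hk⟩
    · rintro ⟨n, hx⟩
      refine ⟨g (Nat.pairEquiv.symm n).1, ?_⟩
      rw [hAF]
      exact mem_iUnion.mpr ⟨_, hx⟩

lemma IsZSigmaSet.inter {A B : Set X} (hA : IsZSigmaSet A) (hB : IsZSigmaSet B) :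
    IsZSigmaSet (A ∩ B) := by
  obtain ⟨F, hF, rfl⟩ := hA
  obtain ⟨G, hG, rfl⟩ := hB
  have : (⋃ n, F n) ∩ (⋃ n, G n) = ⋃ p : ℕ × ℕ, (F p.1 ∩ G p.2) := by
    ext x; simp only [mem_inter_iff, mem_iUnion, Prod.exists]
    constructor
    · rintro ⟨⟨n, hn⟩, ⟨m, hm⟩⟩; exact ⟨n, m, hn, hm⟩
    · rintro ⟨n, m, hn, hm⟩; exact ⟨⟨n, hn⟩, ⟨m, hm⟩⟩
  rw [this]
  exact isZSigmaSet_iUnion _ fun p => ((hF p.1).inter (hG p.2)).isZSigmaSet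

lemma isZSigmaSet_univ : IsZSigmaSet (univ : Set X) :=
  isZeroSet_univ.isZSigmaSet


lemma IsBaire1.preimage_Ioi {h : X → ℝ} (hh : IsBaire1 h) (a : ℝ) :
    IsZSigmaSet (h ⁻¹' Ioi a) := by
  obtain ⟨g, hg, hconv⟩ := hh
  have key : h ⁻¹' Ioi a =
      ⋃ p : ℚ × ℕ, (if a < (p.1 : ℝ) then ⋂ k, {x | (p.1 : ℝ) ≤ g (k + p.2) x} else ∅) := by
    ext x
    simp only [mem_preimage, mem_Ioi, mem_iUnion]
    constructor
    · intro hx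
      obtain ⟨q, hq1, hq2⟩ := exists_rat_btwn hx
      have : ∀ᶠ k in atTop, (q : ℝ) ≤ g k x :=
        (hconv x).eventually (eventually_ge_nhds hq2)
      obtain ⟨N, hN⟩ := eventually_atTop.mp this
      refine ⟨(q, N), ?_⟩
      rw [if_pos hq1]
      exact mem_iInter.mpr fun k => hN _ (Nat.le_add_left N k)
    · rintro ⟨⟨q, N⟩, hx⟩
      by_cases hq : a < (q : ℝ)
      · rw [if_pos hq] at hx
        rw [mem_iInter] at hx
        have hge : (q : ℝ) ≤ h x := by
          refine ge_of_tendsto ((hconv x).comp (tendsto_add_atTop_nat N)) ?_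
          exact Eventually.of_forall fun k => hx k
        linarith
      · rw [if_neg hq] at hx; exact absurd hx (notMem_empty x)
  rw [key]
  refine isZSigmaSet_iUnion _ fun p => ?_
  split_ifs with hq
  · exact (isZeroSet_iInter _ fun k => isZeroSet_ge (hg _) _).isZSigmaSet
  · exact isZSigmaSet_empty

lemma IsBaire1.preimage_Iio {h : X → ℝ} (hh : IsBaire1 h) (b : ℝ) :
    IsZSigmaSet (h ⁻¹' Iio b) := by
  obtain ⟨g, hg, hconv⟩ := hh
  have key : h ⁻¹' Iio b =
      ⋃ p : ℚ × ℕ, (if (p.1 : ℝ) < b then ⋂ k, {x | g (k + p.2) x ≤ (p.1 : ℝ)} else ∅) := by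
    ext x
    simp only [mem_preimage, mem_Iio, mem_iUnion]
    constructor
    · intro hx
      obtain ⟨q, hq1, hq2⟩ := exists_rat_btwn hx
      have : ∀ᶠ k in atTop, g k x ≤ (q : ℝ) :=
        (hconv x).eventually (eventually_le_nhds hq1)
      obtain ⟨N, hN⟩ := eventually_atTop.mp this
      refine ⟨(q, N), ?_⟩
      rw [if_pos hq2]
      exact mem_iInter.mpr fun k => hN _ (Nat.le_add_left N k)
    · rintro ⟨⟨q, N⟩, hx⟩
      by_cases hq : (q : ℝ) < b
      · rw [if_pos hq] at hx
        rw [mem_iInter] at hx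
        have hge : h x ≤ (q : ℝ) := by
          refine le_of_tendsto ((hconv x).comp (tendsto_add_atTop_nat N)) ?_
          exact Eventually.of_forall fun k => hx k
        linarith
      · rw [if_neg hq] at hx; exact absurd hx (notMem_empty x)
  rw [key]
  refine isZSigmaSet_iUnion _ fun p => ?_
  split_ifs with hq
  · exact (isZeroSet_iInter _ fun k => isZeroSet_le (hg _) _).isZSigmaSet
  · exact isZSigmaSet_empty

lemma IsBaire1.preimage_Ioo {h : X → ℝ} (hh : IsBaire1 h) (a b : ℝ) :
    IsZSigmaSet (h ⁻¹' Ioo a b) := by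
  have : h ⁻¹' Ioo a b = (h ⁻¹' Ioi a) ∩ (h ⁻¹' Iio b) := by
    ext x; simp [and_comm]
  rw [this]
  exact (hh.preimage_Ioi a).inter (hh.preimage_Iio b)


lemma isZSigmaSet_biInter {ι : Type*} (s : Finset ι) {A : ι → Set X}
    (h : ∀ i ∈ s, IsZSigmaSet (A i)) : IsZSigmaSet (⋂ i ∈ s, A i) := by
  classical
  induction s using Finset.induction_on with
  | empty => simpa using isZSigmaSet_univ
  | insert a s hnotmem ih =>
    rw [Finset.set_biInter_insert]
    exact (h a (Finset.mem_insert_self a s)).inter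
      (ih fun i hi => h i (Finset.mem_insert_of_mem hi))

lemma preimage_open_isZSigmaSet {ψ : X → ℕ → ℝ} (hb : ∀ n, IsBaire1 (fun x => ψ x n))
    {V : Set (ℕ → ℝ)} (hV : IsOpen V) : IsZSigmaSet (ψ ⁻¹' V) := by
  classical
  set c : (Σ F : Finset ℕ, ({j // j ∈ F} → ℚ × ℚ)) → Set (ℕ → ℝ) :=
    fun p => {v | ∀ i : {j // j ∈ p.1}, v i ∈ Ioo ((p.2 i).1 : ℝ) ((p.2 i).2 : ℝ)} with hc
  have hcover : ψ ⁻¹' V = ⋃ j : {p // c p ⊆ V}, ψ ⁻¹' (c j.1) := by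
    ext x
    simp only [mem_preimage, mem_iUnion]
    constructor
    · intro hx
      obtain ⟨I, u, hIu, hpi⟩ := isOpen_pi_iff.mp hV (ψ x) hx
      have hq : ∀ i : {j // j ∈ I}, ∃ q : ℚ × ℚ,
          ψ x i ∈ Ioo ((q.1 : ℝ)) ((q.2 : ℝ)) ∧ Ioo ((q.1 : ℝ)) ((q.2 : ℝ)) ⊆ u i := by
        rintro ⟨i, hi⟩
        obtain ⟨hou, hmem⟩ := hIu i hi
        obtain ⟨ε, hε, hball⟩ := Metric.isOpen_iff.mp hou _ hmem
        obtain ⟨q1, hq11, hq12⟩ := exists_rat_btwn (show ψ x i - ε < ψ x i by linarith)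
        obtain ⟨q2, hq21, hq22⟩ := exists_rat_btwn (show ψ x i < ψ x i + ε by linarith)
        refine ⟨(q1, q2), ⟨hq12, hq21⟩, fun t ht => hball ?_⟩
        simp only [Metric.mem_ball, Real.dist_eq]
        rw [abs_sub_lt_iff]
        obtain ⟨ht1, ht2⟩ := ht
        constructor <;> linarith
      choose q hq1 hq2 using hq
      refine ⟨⟨⟨I, q⟩, ?_⟩, ?_⟩
      · intro v hv
        apply hpi
        rintro i hi
        exact hq2 ⟨i, hi⟩ (hv ⟨i, hi⟩)
      · exact fun i => hq1 i
    · rintro ⟨⟨p, hp⟩, hx⟩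
      exact hp hx
  rw [hcover]
  refine isZSigmaSet_iUnion _ ?_
  rintro ⟨⟨F, q⟩, -⟩
  set A : ℕ → Set X := fun i =>
    if h : i ∈ F then {x | ψ x i ∈ Ioo ((q ⟨i, h⟩).1 : ℝ) ((q ⟨i, h⟩).2 : ℝ)} else univ with hA
  have : ψ ⁻¹' (c ⟨F, q⟩) = ⋂ i ∈ F, A i := by
    ext x
    simp only [hc, mem_preimage, mem_setOf_eq, mem_iInter, Subtype.forall, hA]
    constructor
    · intro h i hi; rw [dif_pos hi]; exact h i hi
    · intro h i hi; have := h i hi; rw [dif_pos hi] at this; exact this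
  rw [this]
  refine isZSigmaSet_biInter _ fun i hi => ?_
  show IsZSigmaSet (A i)
  have h2 : A i = {x | ψ x i ∈ Ioo ((q ⟨i, hi⟩).1 : ℝ) ((q ⟨i, hi⟩).2 : ℝ)} := dif_pos hi
  rw [h2]
  exact (hb i).preimage_Ioo _ _


lemma b1dense_iff_approx {D : Set {f : X → ℝ // IsBaire1 f}} :
    Dense D ↔ ∀ (f : X → ℝ), IsBaire1 f → ∀ (G : Finset X), ∀ ε > (0:ℝ),
      ∃ g ∈ D, ∀ x ∈ G, |(g : {f : X → ℝ // IsBaire1 f}).1 x - f x| < ε := by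
  constructor
  · intro hD f hf G ε hε
    set O : Set {f : X → ℝ // IsBaire1 f} := ⋂ x ∈ G, {h | |h.1 x - f x| < ε} with hO
    have hOopen : IsOpen O := by
      refine isOpen_biInter_finset fun x _ => ?_
      have : {h : {f : X → ℝ // IsBaire1 f} | |h.1 x - f x| < ε} =
          (fun h : {f : X → ℝ // IsBaire1 f} => h.1 x) ⁻¹' (Metric.ball (f x) ε) := by
        ext h; simp [Real.dist_eq]
      rw [this]
      exact (((continuous_apply x).comp continuous_subtype_val)).isOpen_preimage _
        Metric.isOpen_ball
    have hne : O.Nonempty := ⟨⟨f, hf⟩, by simp [hO, hε]⟩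
    obtain ⟨g, hgD, hgO⟩ := hD.exists_mem_open hOopen hne
    refine ⟨g, hgD, fun x hx => ?_⟩
    simp only [hO, mem_iInter, mem_setOf_eq] at hgO
    exact hgO x hx
  · intro happrox
    rw [dense_iff_inter_open]
    rintro U hU ⟨⟨f₀, hf₀⟩, hfU⟩
    obtain ⟨W, hW, rfl⟩ := isOpen_induced_iff.mp hU
    have hf₀W : f₀ ∈ W := hfU
    obtain ⟨I, u, hIu, hpi⟩ := isOpen_pi_iff.mp hW f₀ hf₀W
    have he : ∀ x ∈ I, ∃ e : ℝ, 0 < e ∧ Metric.ball (f₀ x) e ⊆ u x := fun x hx =>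
      Metric.isOpen_iff.mp (hIu x hx).1 _ (hIu x hx).2
    choose e he1 he2 using he
    rcases I.eq_empty_or_nonempty with rfl | hIne
    · obtain ⟨g, hgD, -⟩ := happrox f₀ hf₀ ∅ 1 one_pos
      refine ⟨g, ?_, hgD⟩
      show g.1 ∈ W
      apply hpi
      simp
    · classical
      set ε : ℝ := (I.attach.image fun x => e x.1 x.2).min'
        (Finset.image_nonempty.mpr (Finset.attach_nonempty_iff.mpr hIne)) with hε
      have hεpos : 0 < ε := by
        have hmem : ε ∈ I.attach.image fun x => e x.1 x.2 := by
          rw [hε]; exact Finset.min'_mem _ _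
        obtain ⟨x, -, hxe⟩ := Finset.mem_image.mp hmem
        rw [← hxe]
        exact he1 _ _
      obtain ⟨g, hgD, hg⟩ := happrox f₀ hf₀ I ε hεpos
      refine ⟨g, ?_, hgD⟩
      show g.1 ∈ W
      apply hpi
      intro x hx
      apply he2 x hx
      rw [Metric.mem_ball, Real.dist_eq]
      calc |g.1 x - f₀ x| < ε := hg x hx
        _ ≤ e x hx := Finset.min'_le _ _ (Finset.mem_image.mpr ⟨⟨x, hx⟩, Finset.mem_attach _ _, rfl⟩)

end ZAux

lemma exists_countable_approx_family (Z : Type*) [TopologicalSpace Z]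
    [TopologicalSpace.MetrizableSpace Z] [TopologicalSpace.SeparableSpace Z] :
    ∃ D : Set (Z → ℝ), D.Countable ∧ (∀ g ∈ D, Continuous g) ∧
      ∀ (f : Z → ℝ) (G : Finset Z), ∀ ε > (0:ℝ), ∃ g ∈ D, ∀ x ∈ G, |g x - f x| < ε := by
  classical
  letI : MetricSpace Z := TopologicalSpace.metrizableSpaceMetric Z
  cases isEmpty_or_nonempty Z with
  | inl hemp =>
    refine ⟨{fun _ => 0}, countable_singleton _, ?_, ?_⟩
    · rintro g rfl; exact continuous_const
    · intro f G ε hε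
      refine ⟨fun _ => 0, rfl, fun x _ => ?_⟩
      exact absurd (Nonempty.intro x) (not_nonempty_iff.mpr hemp)
  | inr hne =>
    set cs : ℕ → Z := TopologicalSpace.denseSeq Z with hcs
    have hcsd : DenseRange cs := TopologicalSpace.denseRange_denseSeq Z
    set Φ : Finset (ℚ × ℕ × ℚ) → Z → ℝ := fun s x =>
      ∑ p ∈ s, (p.1 : ℝ) * max 0 (1 - dist x (cs p.2.1) / (p.2.2 : ℝ)) with hΦ
    refine ⟨Set.range Φ, Set.countable_range _, ?_, ?_⟩
    · rintro g ⟨s, rfl⟩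
      refine continuous_finset_sum _ fun p _ => ?_
      refine continuous_const.mul (continuous_const.max ?_)
      exact continuous_const.sub ((continuous_id.dist continuous_const).div_const _)
    · intro f G ε hε
      rcases G.eq_empty_or_nonempty with rfl | hGne
      · exact ⟨Φ ∅, ⟨∅, rfl⟩, fun x hx => absurd hx (Finset.notMem_empty x)⟩
      -- rational values close to f
      have hq : ∀ x : {a // a ∈ G}, ∃ q : ℚ, |(q : ℝ) - f x.1| < ε/2 := by
        intro x
        obtain ⟨q, hq1, hq2⟩ := exists_rat_btwn (sub_lt_self (f x.1) (half_pos hε))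
        exact ⟨q, abs_lt.mpr ⟨by linarith, by linarith⟩⟩
      choose qx hqx using hq
      have hGatt : G.attach.Nonempty := Finset.attach_nonempty_iff.mpr hGne
      set Qb : ℝ := 1 + G.attach.sup' hGatt (fun x => |(qx x : ℝ)|) with hQb
      have hQble : ∀ x : {a // a ∈ G}, |(qx x : ℝ)| ≤ Qb := by
        intro x
        have := Finset.le_sup' (fun x : {a // a ∈ G} => |(qx x : ℝ)|) (Finset.mem_attach G x)
        simp only [hQb]; linarith
      have hsup0 : (0:ℝ) ≤ G.attach.sup' hGatt (fun x => |(qx x : ℝ)|) :=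
        le_trans (abs_nonneg _) (Finset.le_sup' (f := fun x : {a // a ∈ G} => |(qx x : ℝ)|) (Finset.mem_attach G hGatt.choose))
      have hQbpos : 0 < Qb := by rw [hQb]; linarith
      -- minimal distance δ
      set S : Finset ℝ := G.offDiag.image (fun p => dist p.1 p.2) with hS
      set δ : ℝ := if h : S.Nonempty then S.min' h else 1 with hδ
      have hSpos : ∀ r ∈ S, 0 < r := by
        intro r hr
        obtain ⟨p, hp, rfl⟩ := Finset.mem_image.mp hr
        exact dist_pos.mpr (Finset.mem_offDiag.mp hp).2.2
      have hδpos : 0 < δ := by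
        rw [hδ]
        split_ifs with h
        · exact hSpos _ (S.min'_mem h)
        · exact one_pos
      have hδle : ∀ x ∈ G, ∀ y ∈ G, x ≠ y → δ ≤ dist x y := by
        intro x hx y hy hxy
        have hmem : dist x y ∈ S :=
          Finset.mem_image.mpr ⟨(x, y), Finset.mem_offDiag.mpr ⟨hx, hy, hxy⟩, rfl⟩
        rw [hδ, dif_pos ⟨_, hmem⟩]
        exact Finset.min'_le _ _ hmem
      -- rational radius ρ
      obtain ⟨ρ, hρ0, hρδ⟩ := exists_rat_btwn (show (0:ℝ) < δ/2 by linarith)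
      -- closeness bound β
      set β : ℝ := min ((ρ : ℝ) * ε / (2 * Qb)) (δ/2) with hβ
      have hβpos : 0 < β := lt_min (by positivity) (by linarith)
      have hβρ : β ≤ (ρ : ℝ) * ε / (2 * Qb) := min_le_left _ _
      have hβδ : β ≤ δ/2 := min_le_right _ _
      -- choose close centers
      have hn : ∀ x : {a // a ∈ G}, ∃ m : ℕ, dist x.1 (cs m) < β := fun x =>
        Metric.denseRange_iff.mp hcsd x.1 β hβpos
      choose nx hnx using hn
      set trip : {a // a ∈ G} → ℚ × ℕ × ℚ := fun x => (qx x, nx x, ρ) with htrip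
      have htinj : Set.InjOn trip G.attach := by
        intro x _ y _ hxy
        by_contra hne2
        have hvne : x.1 ≠ y.1 := fun h => hne2 (Subtype.ext h)
        have hn_eq : nx x = nx y := by
          have := congrArg (fun p => p.2.1) hxy
          simpa [htrip] using this
        have h1 : dist x.1 y.1 ≤ dist x.1 (cs (nx x)) + dist y.1 (cs (nx y)) := by
          rw [hn_eq]
          exact dist_triangle_right _ _ _
        have h2 := hδle x.1 x.2 y.1 y.2 hvne
        have h3 := hnx x
        have h4 := hnx y
        linarith
      set s : Finset (ℚ × ℕ × ℚ) := G.attach.image trip with hs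
      refine ⟨Φ s, ⟨s, rfl⟩, ?_⟩
      intro y hy
      have himg := Finset.sum_image (s := G.attach) (g := trip)
        (f := fun p : ℚ × ℕ × ℚ => (p.1 : ℝ) * max 0 (1 - dist y (cs p.2.1) / (p.2.2 : ℝ)))
        (fun a ha b hb hab => htinj ha hb hab)
      have hsum : Φ s y = ∑ x ∈ G.attach,
          (qx x : ℝ) * max 0 (1 - dist y (cs (nx x)) / (ρ : ℝ)) := himg
      have hsingle : ∑ x ∈ G.attach,
          (qx x : ℝ) * max 0 (1 - dist y (cs (nx x)) / (ρ : ℝ)) =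
          (qx ⟨y, hy⟩ : ℝ) * max 0 (1 - dist y (cs (nx ⟨y, hy⟩)) / (ρ : ℝ)) := by
        refine Finset.sum_eq_single_of_mem (⟨y, hy⟩ : {a // a ∈ G}) (Finset.mem_attach _ _) ?_
        intro x _ hxne
        have hvne : x.1 ≠ y := fun h => hxne (Subtype.ext h)
        have hd : (ρ : ℝ) < dist y (cs (nx x)) := by
          have h1 : δ ≤ dist y x.1 := hδle y hy x.1 x.2 (Ne.symm hvne)
          have h2 : dist x.1 (cs (nx x)) < β := hnx x
          have h3 : dist y x.1 ≤ dist y (cs (nx x)) + dist x.1 (cs (nx x)) :=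
            dist_triangle_right _ _ _
          linarith
        have hmax : max 0 (1 - dist y (cs (nx x)) / (ρ : ℝ)) = 0 := by
          apply max_eq_left
          rw [sub_nonpos]
          rw [le_div_iff₀ hρ0]
          linarith
        rw [hmax, mul_zero]
      rw [hsum, hsingle]
      -- final estimate
      set q : ℝ := (qx ⟨y, hy⟩ : ℝ)
      set d : ℝ := dist y (cs (nx ⟨y, hy⟩)) with hd
      have hd0 : 0 ≤ d := dist_nonneg
      have hdβ : d < β := hnx ⟨y, hy⟩
      set b : ℝ := max 0 (1 - d / (ρ : ℝ)) with hb
      have hb1 : b ≤ 1 := by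
        rw [hb]
        apply max_le one_pos.le
        have : 0 ≤ d / (ρ : ℝ) := div_nonneg hd0 hρ0.le
        linarith
      have hb2 : 1 - b ≤ d / (ρ : ℝ) := by
        rw [hb]
        rcases le_or_gt (1 - d / (ρ : ℝ)) 0 with h | h
        · rw [max_eq_left h]
          have : 0 ≤ d / (ρ : ℝ) := div_nonneg hd0 hρ0.le
          linarith
        · rw [max_eq_right h.le]
          linarith
      have hb0 : 0 ≤ b := le_max_left _ _
      have hqQ : |q| ≤ Qb := hQble ⟨y, hy⟩
      have hqf : |q - f y| < ε/2 := hqx ⟨y, hy⟩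
      have hdρ : d / (ρ : ℝ) ≤ ε / (2 * Qb) := by
        rw [div_le_iff₀ hρ0]
        calc d ≤ β := hdβ.le
          _ ≤ (ρ : ℝ) * ε / (2 * Qb) := hβρ
          _ = ε / (2 * Qb) * (ρ : ℝ) := by ring
      have e1 : |q * b - f y| ≤ |q * b - q| + |q - f y| := abs_sub_le _ _ _
      have e2 : |q * b - q| = |q| * (1 - b) := by
        rw [show q * b - q = q * (b - 1) by ring, abs_mul,
          abs_of_nonpos (by linarith : b - 1 ≤ 0)]
        ring
      have e3 : |q| * (1 - b) ≤ ε / 2 := by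
        have h5 : |q| * (1 - b) ≤ Qb * (d / (ρ : ℝ)) :=
          mul_le_mul hqQ hb2 (by linarith) hQbpos.le
        have h6 : Qb * (d / (ρ : ℝ)) ≤ Qb * (ε / (2 * Qb)) :=
          mul_le_mul_of_nonneg_left hdρ hQbpos.le
        have h7 : Qb * (ε / (2 * Qb)) = ε / 2 := by field_simp
        linarith
      linarith


lemma exists_countable_approx_family' (Z : Type*) [TopologicalSpace Z]
    [SecondCountableTopology Z] [T35Space Z] :
    ∃ D : Set (Z → ℝ), D.Countable ∧ (∀ g ∈ D, Continuous g) ∧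
      ∀ (f : Z → ℝ) (G : Finset Z), ∀ ε > (0:ℝ), ∃ g ∈ D, ∀ x ∈ G, |g x - f x| < ε := by
  haveI := TopologicalSpace.metrizableSpace_of_t3_secondCountable Z
  exact exists_countable_approx_family Z

lemma b1_separable_aux {X : Type*} [tX : TopologicalSpace X]
    (hcoarse : ∃ τ : TopologicalSpace X, (∀ U : Set X, IsOpen[τ] U → IsOpen[tX] U) ∧
      @SecondCountableTopology X τ ∧ @T35Space X τ) :
    ∃ D₀ : Set (X → ℝ), D₀.Countable ∧ (∀ g ∈ D₀, Continuous g) ∧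
      ∀ (f : X → ℝ) (G : Finset X), ∀ ε > (0:ℝ), ∃ g ∈ D₀, ∀ x ∈ G, |g x - f x| < ε := by
  obtain ⟨τ, hco, hsc, ht35⟩ := hcoarse
  obtain ⟨D₀, hc, hcont, happ⟩ := @exists_countable_approx_family' X τ hsc ht35
  refine ⟨D₀, hc, ?_, happ⟩
  intro g hg
  rw [continuous_def]
  intro U hU
  exact hco _ ((@continuous_def X ℝ τ _ g).mp (hcont g hg) U hU)

theorem b1_stronglySeqSeparable_of_gamma
    {X : Type*} [tX : TopologicalSpace X] [T35Space X]
    (hcoarse : ∃ τ : TopologicalSpace X, (∀ U : Set X, IsOpen[τ] U → IsOpen[tX] U) ∧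
      @SecondCountableTopology X τ ∧ @T35Space X τ)
    (hγ : ∀ (Y : Type) (tY : TopologicalSpace Y), @SeparableSpace Y tY →
      @MetrizableSpace Y tY → ∀ φ : X → Y, Function.Bijective φ →
      (∀ U : Set Y, IsOpen[tY] U → IsZSigmaSet (φ ⁻¹' U)) →
      @HasPropertyGamma Y tY) :
    StronglySeqSeparable {f : X → ℝ // IsBaire1 f} := by
  classical
  have hb1_of_cont : ∀ g : X → ℝ, Continuous g → IsBaire1 g :=
    fun g hg => ⟨fun _ => g, fun _ => hg, fun x => tendsto_const_nhds⟩
  obtain ⟨D₀, hD₀c, hD₀cont, hD₀approx⟩ := b1_separable_aux hcoarse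
  constructor
  · -- separability
    refine ⟨{h : {f : X → ℝ // IsBaire1 f} | h.1 ∈ D₀}, hD₀c.preimage Subtype.val_injective, ?_⟩
    refine b1dense_iff_approx.mpr ?_
    intro f hf G ε hε
    obtain ⟨g₀, hg₀, hap⟩ := hD₀approx f G ε hε
    exact ⟨⟨g₀, hb1_of_cont g₀ (hD₀cont g₀ hg₀)⟩, hg₀, hap⟩
  · -- sequential density
    intro D hDc hDdense F
    by_cases hXc : Countable X
    · exact mem_closure_iff_seq_limit.mp (hDdense F)
    · have hXinf : Infinite X := by
        rw [← not_finite_iff_infinite]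
        intro hfin
        exact hXc (Finite.to_countable)
      haveI : Nonempty {f : X → ℝ // IsBaire1 f} :=
        ⟨⟨fun _ => 0, hb1_of_cont _ continuous_const⟩⟩
      obtain ⟨e, he⟩ := hDc.exists_eq_range hDdense.nonempty
      set h : ℕ → X → ℝ := fun n => Nat.casesOn n F.1 (fun k => (e k).1) with hh
      have hb : ∀ n, IsBaire1 (h n) := fun n => Nat.casesOn n F.2 (fun k => (e k).2)
      set ψ : X → ℕ → ℝ := fun x n => h n x with hψ
      have happrox := b1dense_iff_approx.mp hDdense
      have hψinj : Function.Injective ψ := by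
        intro x y hxy
        by_contra hne
        obtain ⟨g, hgc, hg0, hg1⟩ := CompletelyRegularSpace.completely_regular x {y}
          isClosed_singleton (by simpa using hne)
        set g' : X → ℝ := fun z => (g z : ℝ) with hg'
        have hg'b : IsBaire1 g' := hb1_of_cont _ (continuous_subtype_val.comp hgc)
        obtain ⟨d, hdD, hd⟩ := happrox g' hg'b {x, y} (1/2) (by norm_num)
        have hdx := hd x (by simp)
        have hdy := hd y (by simp)
        have hx0 : g' x = 0 := by rw [hg']; simp only; rw [hg0]; rfl
        have hy1 : g' y = 1 := by rw [hg']; simp only; rw [hg1 rfl]; rfl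
        rw [hx0] at hdx
        rw [hy1] at hdy
        have hdne : d.1 x ≠ d.1 y := by
          intro hEq
          rw [hEq] at hdx
          rw [abs_lt] at hdx hdy
          linarith [hdx.1, hdx.2, hdy.1, hdy.2]
        obtain ⟨k, hk⟩ : ∃ k, e k = d := by
          have : d ∈ Set.range e := he ▸ hdD
          exact this
        apply hdne
        have hcf := congrFun hxy (k+1)
        rw [← hk]
        exact hcf
      set Y : Set (ℕ → ℝ) := Set.range ψ with hY
      set φ : X → ↥Y := Set.rangeFactorization ψ with hφ
      have hφbij : Function.Bijective φ :=
        ⟨fun a b hab => hψinj (congrArg Subtype.val hab), Set.rangeFactorization_surjective⟩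
      have hZ : ∀ U : Set ↥Y, IsOpen U → IsZSigmaSet (φ ⁻¹' U) := by
        intro U hU
        obtain ⟨V, hV, rfl⟩ := isOpen_induced_iff.mp hU
        have heq : φ ⁻¹' (Subtype.val ⁻¹' V) = ψ ⁻¹' V := rfl
        rw [heq]
        exact preimage_open_isZSigmaSet hb hV
      have hγY := hγ (↥Y) inferInstance inferInstance inferInstance φ hφbij hZ
      haveI : Infinite ↥Y := Infinite.of_injective φ hφbij.injective
      set yseq : ℕ → ↥Y := fun m => Infinite.natEmbedding ↥Y m with hyseq
      have hyinj : Function.Injective yseq := (Infinite.natEmbedding _).injective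
      set α : Set (Set ↥Y) := {S | ∃ n m : ℕ,
        S = {y : ↥Y | |y.1 (n+1) - y.1 0| < 1/((m:ℝ)+1)} \ {yseq m}} with hα
      have hαopen : ∀ S ∈ α, IsOpen S := by
        rintro S ⟨n, m, rfl⟩
        rw [Set.diff_eq]
        refine IsOpen.inter ?_ isOpen_compl_singleton
        have heq : {y : ↥Y | |y.1 (n+1) - y.1 0| < 1/((m:ℝ)+1)} =
            (fun y : ↥Y => |y.1 (n+1) - y.1 0|) ⁻¹' Set.Iio (1/((m:ℝ)+1)) := rfl
        rw [heq]
        refine IsOpen.preimage ?_ isOpen_Iio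
        exact (((continuous_apply (n+1)).comp continuous_subtype_val).sub
          ((continuous_apply 0).comp continuous_subtype_val)).abs
      have hαcov : ∀ F' : Set ↥Y, F'.Finite → ∃ S ∈ α, F' ⊆ S := by
        intro F' hF'
        obtain ⟨m, hm⟩ : ∃ m, yseq m ∉ F' := by
          have hfin : (yseq ⁻¹' F').Finite :=
            Set.Finite.preimage (Set.injOn_of_injective hyinj) hF'
          obtain ⟨m, hm⟩ := hfin.infinite_compl.nonempty
          exact ⟨m, hm⟩
        set pre : ↥Y → X := fun y => y.2.choose with hpre
        have hpre_spec : ∀ y : ↥Y, ψ (pre y) = y.1 := fun y => y.2.choose_spec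
        have hεp : (0:ℝ) < 1/((m:ℝ)+1) := by positivity
        obtain ⟨d, hdD, hd⟩ := happrox F.1 F.2 (hF'.image pre).toFinset _ hεp
        obtain ⟨n, hn⟩ : ∃ n, e n = d := by
          have : d ∈ Set.range e := he ▸ hdD
          exact this
        refine ⟨_, ⟨n, m, rfl⟩, ?_⟩
        intro y hy
        constructor
        · have hxG : pre y ∈ (hF'.image pre).toFinset :=
            (Set.Finite.mem_toFinset _).mpr ⟨y, hy, rfl⟩
          have happ := hd (pre y) hxG
          have h1 : y.1 (n+1) = d.1 (pre y) := by
            rw [← hpre_spec y, ← hn]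
          have h2 : y.1 0 = F.1 (pre y) := by
            rw [← hpre_spec y]
            rfl
          show |y.1 (n+1) - y.1 0| < 1/((m:ℝ)+1)
          rw [h1, h2]
          exact happ
        · simp only [Set.mem_singleton_iff]
          intro hEq
          exact hm (hEq ▸ hy)
      obtain ⟨u, hu1, hu2⟩ := hγY α hαopen hαcov
      choose nk mk hk using hu1
      refine ⟨fun k => e (nk k), fun k => by rw [he]; exact Set.mem_range_self _, ?_⟩
      rw [IsEmbedding.subtypeVal.tendsto_nhds_iff, tendsto_pi_nhds]
      intro x
      rw [Metric.tendsto_atTop]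
      intro ε hε
      obtain ⟨M, hM⟩ := exists_nat_one_div_lt hε
      have hev1 : ∀ᶠ k in atTop, φ x ∈ u k := hu2 (φ x)
      have hev2 : ∀ᶠ k in atTop, ∀ j ∈ {j : ℕ | j < M}, mk k ≠ j := by
        refine (eventually_all_finite (Set.finite_lt_nat M)).mpr ?_
        intro j hj
        filter_upwards [hu2 (yseq j)] with k hkj
        intro hmkj
        rw [hk k] at hkj
        exact hkj.2 (by rw [hmkj]; exact rfl)
      obtain ⟨N, hN⟩ := eventually_atTop.mp (hev1.and hev2)
      refine ⟨N, fun k hkN => ?_⟩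
      obtain ⟨hφx, hjs⟩ := hN k hkN
      have hmkM : M ≤ mk k := by
        by_contra hlt
        push_neg at hlt
        exact hjs (mk k) hlt rfl
      rw [hk k] at hφx
      have hφx1 : |(φ x).1 (nk k + 1) - (φ x).1 0| < 1/((mk k : ℝ)+1) := hφx.1
      have hc1 : (φ x).1 (nk k + 1) = (e (nk k)).1 x := rfl
      have hc2 : (φ x).1 0 = F.1 x := rfl
      rw [hc1, hc2] at hφx1
      have hle : 1/((mk k : ℝ)+1) ≤ 1/((M:ℝ)+1) := by
        apply one_div_le_one_div_of_le (by positivity)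
        have : (M:ℝ) ≤ (mk k : ℝ) := Nat.cast_le.mpr hmkM
        linarith
      show dist ((e (nk k)).1 x) (F.1 x) < ε
      rw [Real.dist_eq]
      calc |(e (nk k)).1 x - F.1 x| < 1/((mk k : ℝ)+1) := hφx1
        _ ≤ 1/((M:ℝ)+1) := hle
        _ < ε := hM
end

section
/- C_p(X), the space of continuous real-valued functions on a Tychonoff space X with the pointwise convergence topology, is Fréchet–Urysohn if and only if X has property γ. -/
open Set Filter Topology TopologicalSpace

lemma gamma_pigeon {n : ℕ → ℕ} {N : ℕ} (h : ∀ k, N ≤ k → n k < N) :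
    ∃ c, {k | n k = c}.Infinite := by
  by_contra hc
  push_neg at hc
  have : (Set.univ : Set ℕ).Finite := by
    apply Set.Finite.subset ((Set.finite_Iio N).union ((Set.finite_Iio N).biUnion
      (fun c _ => hc c)))
    intro k _
    rcases lt_or_ge k N with hk | hk
    · exact Or.inl hk
    · exact Or.inr (Set.mem_biUnion (h k hk) rfl)
  exact Set.infinite_univ this

lemma gamma_seq_aux {X : Type*} [TopologicalSpace X] (hX : HasPropertyGamma X)
    (𝒰 : ℕ → Set (Set X))
    (hopen : ∀ n, ∀ U ∈ 𝒰 n, IsOpen U)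
    (hcov : ∀ n, ∀ F : Set X, F.Finite → ∃ U ∈ 𝒰 n, F ⊆ U)
    (huniv : (Set.univ : Set X) ∉ 𝒰 0) :
    ∃ u : ℕ → Set X, (∀ n, u n ∈ 𝒰 n) ∧ ∀ x : X, ∀ᶠ n in atTop, x ∈ u n := by
  have hsel : ∀ F : Set X, F.Finite → ∃ U : ℕ → Set X, ∀ i, U i ∈ 𝒰 i ∧ F ⊆ U i := by
    intro F hF
    choose U h1 h2 using fun i => hcov i F hF
    exact ⟨U, fun i => ⟨h1 i, h2 i⟩⟩
  obtain ⟨V, hVmem, hVlim⟩ := hX (𝒰 0) (hopen 0) (hcov 0)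
  have hWopen : ∀ W ∈ { W | ∃ (m : ℕ) (U : ℕ → Set X), (∀ i, U i ∈ 𝒰 i) ∧
      W = V m ∩ ⋂ i ∈ Finset.range (m + 1), U i }, IsOpen W := by
    rintro W ⟨m, U, hU, rfl⟩
    exact (hopen 0 _ (hVmem m)).inter
      (isOpen_biInter_finset fun i _ => hopen i _ (hU i))
  have hWcov : ∀ F : Set X, F.Finite → ∃ W ∈ { W | ∃ (m : ℕ) (U : ℕ → Set X),
      (∀ i, U i ∈ 𝒰 i) ∧ W = V m ∩ ⋂ i ∈ Finset.range (m + 1), U i }, F ⊆ W := by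
    intro F hF
    have hev : ∀ᶠ m in atTop, ∀ x ∈ F, x ∈ V m :=
      (eventually_all_finite hF).mpr fun x _ => hVlim x
    obtain ⟨M, hM⟩ := eventually_atTop.mp hev
    obtain ⟨U, hU⟩ := hsel F hF
    refine ⟨V M ∩ ⋂ i ∈ Finset.range (M + 1), U i, ⟨M, U, fun i => (hU i).1, rfl⟩, ?_⟩
    intro x hx
    refine ⟨hM M le_rfl x hx, ?_⟩
    simp only [Set.mem_iInter]
    intro i _
    exact (hU i).2 hx
  obtain ⟨W, hWmem, hWlim⟩ := hX _ hWopen hWcov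
  · choose m' Uj hUj hWeq using hWmem
    by_cases hA : ∀ N : ℕ, ∃ j, N ≤ j ∧ N ≤ m' j
    · choose jf hjf1 hjf2 using hA
      refine ⟨fun n => Uj (jf n) n, fun n => hUj (jf n) n, ?_⟩
      intro x
      rw [eventually_atTop]
      obtain ⟨K, hK⟩ := eventually_atTop.mp (hWlim x)
      refine ⟨K, fun n hn => ?_⟩
      have hx : x ∈ W (jf n) := hK _ (le_trans hn (hjf1 n))
      rw [hWeq (jf n)] at hx
      have hx2 := hx.2
      simp only [Set.mem_iInter] at hx2
      exact hx2 n (Finset.mem_range.mpr (Nat.lt_succ_of_le (hjf2 n)))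
    · push_neg at hA
      obtain ⟨N, hN⟩ := hA
      have hN' : ∀ j, N ≤ j → m' j < N := fun j hj => hN j hj
      obtain ⟨c, hc⟩ := gamma_pigeon hN'
      exfalso
      have hVc : V c = Set.univ := by
        apply Set.eq_univ_of_forall
        intro x
        obtain ⟨K, hK⟩ := eventually_atTop.mp (hWlim x)
        obtain ⟨j, hj1, hj2⟩ := hc.exists_notMem_finite (Set.finite_Iio K)
        have hx := hK j (le_of_not_gt hj2)
        rw [hWeq j] at hx
        have : x ∈ V (m' j) := hx.1
        rwa [hj1] at this
      exact huniv (hVc ▸ hVmem c)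

lemma gamma_seq {X : Type*} [TopologicalSpace X] (hX : HasPropertyGamma X)
    (𝒰 : ℕ → Set (Set X))
    (hopen : ∀ n, ∀ U ∈ 𝒰 n, IsOpen U)
    (hcov : ∀ n, ∀ F : Set X, F.Finite → ∃ U ∈ 𝒰 n, F ⊆ U) :
    ∃ u : ℕ → Set X, (∀ n, u n ∈ 𝒰 n) ∧ ∀ x : X, ∀ᶠ n in atTop, x ∈ u n := by
  classical
  set p : ℕ → Prop := fun n => (Set.univ : Set X) ∉ 𝒰 n with hp
  by_cases hfin : (setOf p).Finite
  · have hne : ∀ n, ∃ U, U ∈ 𝒰 n := fun n => by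
      obtain ⟨U, hU, -⟩ := hcov n ∅ Set.finite_empty; exact ⟨U, hU⟩
    choose W hW using hne
    refine ⟨fun n => if h : p n then W n else Set.univ, fun n => ?_, fun x => ?_⟩
    · by_cases h : p n
      · simp only [dif_pos h]; exact hW n
      · simp only [dif_neg h]
        exact not_not.mp h
    · rw [← Nat.cofinite_eq_atTop, eventually_cofinite]
      apply hfin.subset
      intro n hn
      simp only [Set.mem_setOf_eq] at hn
      by_cases h : p n
      · exact h
      · simp only [dif_neg h] at hn
        exact absurd (Set.mem_univ x) hn
  · have hinf : (setOf p).Infinite := hfin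
    obtain ⟨v, hv1, hv2⟩ := gamma_seq_aux hX (fun n => 𝒰 (Nat.nth p n))
      (fun n => hopen _) (fun n => hcov _) (Nat.nth_mem_of_infinite hinf 0)
    refine ⟨fun n => if h : p n then v (Nat.count p n) else Set.univ, fun n => ?_, fun x => ?_⟩
    · by_cases h : p n
      · simp only [dif_pos h]
        have := hv1 (Nat.count p n)
        rwa [Nat.nth_count h] at this
      · simp only [dif_neg h]
        exact not_not.mp h
    · obtain ⟨K, hK⟩ := eventually_atTop.mp (hv2 x)
      rw [eventually_atTop]
      refine ⟨Nat.nth p K, fun n hn => ?_⟩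
      by_cases h : p n
      · simp only [dif_pos h]
        apply hK
        have hmono := Nat.count_monotone p hn
        rwa [Nat.count_nth_of_infinite hinf] at hmono
      · simp only [dif_neg h]
        exact Set.mem_univ x

theorem cp_frechetUrysohn_iff_gamma
    {X : Type*} [TopologicalSpace X] [T35Space X] :
    FrechetUrysohnSpace {f : X → ℝ // Continuous f} ↔ HasPropertyGamma X := by
  constructor
  · -- Fréchet–Urysohn ⇒ γ
    intro hFU α hαopen hαcov
    classical
    set C := {f : X → ℝ // Continuous f}
    set z : C := ⟨fun _ => 0, continuous_const⟩ with hzdef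
    set A : Set C := { g | ∃ U ∈ α, ∀ x, x ∉ U → g.1 x = 1 } with hAdef
    have hzA : z ∈ closure A := by
      rw [mem_closure_iff_nhds]
      intro t ht
      rw [show 𝓝 z = comap Subtype.val (𝓝 z.1) from nhds_induced _ _] at ht
      obtain ⟨s, hs, hsub⟩ := Filter.mem_comap.mp ht
      rw [nhds_pi] at hs
      obtain ⟨I, hIfin, t', ht', hsub2⟩ := Filter.mem_pi.mp hs
      obtain ⟨U, hUα, hIU⟩ := hαcov I hIfin
      have hfun : ∀ y : X, ∃ g : X → ℝ, Continuous g ∧ (y ∈ I → g y = 0) ∧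
          (y ∈ I → ∀ w, w ∉ U → g w = 1) := by
        intro y
        by_cases hy : y ∈ I
        · obtain ⟨g, hgc, hg0, hg1⟩ := CompletelyRegularSpace.completely_regular y Uᶜ
            (hαopen U hUα).isClosed_compl (by simp [hIU hy])
          refine ⟨fun w => (g w : ℝ), continuous_subtype_val.comp hgc, ?_, ?_⟩
          · intro _
            show ((g y : ℝ)) = 0
            rw [hg0]
            rfl
          · intro _ w hw
            show ((g w : ℝ)) = 1
            have := hg1 (show w ∈ Uᶜ from hw)
            rw [this]
            rfl
        · exact ⟨fun _ => 1, continuous_const, fun h => absurd h hy, fun h => absurd h hy⟩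
      choose g hgc hg0 hg1 using hfun
      set fc : X → ℝ := fun w => ∏ y ∈ hIfin.toFinset, g y w with hfc
      have hfcont : Continuous fc := continuous_finset_prod _ fun y _ => hgc y
      refine ⟨⟨fc, hfcont⟩, hsub (hsub2 ?_), ?_⟩
      · intro x hxI
        have h0 : fc x = 0 :=
          Finset.prod_eq_zero (hIfin.mem_toFinset.mpr hxI) (hg0 x hxI)
        have : (0 : ℝ) ∈ t' x := mem_of_mem_nhds (ht' x)
        rwa [← h0] at this
      · exact ⟨U, hUα, fun x hx =>
          Finset.prod_eq_one fun y hy => hg1 y (hIfin.mem_toFinset.mp hy) x hx⟩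
    haveI := hFU
    obtain ⟨u, hu1, hu2⟩ := mem_closure_iff_seq_limit.mp hzA
    choose Us hUs hUs1 using hu1
    refine ⟨Us, hUs, ?_⟩
    intro y
    have hty : Tendsto (fun n => (u n).1 y) atTop (𝓝 (0 : ℝ)) :=
      (tendsto_pi_nhds.mp (tendsto_subtype_rng.mp hu2)) y
    have hev := (Metric.tendsto_nhds.mp hty) 1 one_pos
    filter_upwards [hev] with n hn
    by_contra hy
    have h1 : (u n).1 y = 1 := hUs1 n y hy
    rw [Real.dist_eq, h1] at hn
    norm_num at hn
  · -- γ ⇒ Fréchet–Urysohn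
    intro hγ
    constructor
    intro A f hf
    classical
    set α : ℕ → Set (Set X) := fun k =>
      { U | ∃ h ∈ A, U = { x | |h.1 x - f.1 x| < 1 / (k + 1 : ℝ) } } with hαdef
    have hopen : ∀ k, ∀ U ∈ α k, IsOpen U := by
      rintro k U ⟨h, -, rfl⟩
      exact isOpen_lt ((h.2.sub f.2).abs) continuous_const
    have hcov : ∀ k, ∀ F : Set X, F.Finite → ∃ U ∈ α k, F ⊆ U := by
      intro k F hF
      have hnhds : (⋂ x ∈ F, {g : X → ℝ | |g x - f.1 x| < 1 / (k + 1 : ℝ)}) ∈ 𝓝 f.1 := by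
        rw [Filter.biInter_mem hF]
        intro x _
        have hc : Continuous fun g : X → ℝ => g x := continuous_apply x
        have heq : {g : X → ℝ | |g x - f.1 x| < 1 / (k + 1 : ℝ)}
            = (fun g : X → ℝ => g x) ⁻¹' Metric.ball (f.1 x) (1 / (k + 1 : ℝ)) := by
          ext g
          simp [Metric.mem_ball, Real.dist_eq]
        rw [heq]
        exact hc.continuousAt.preimage_mem_nhds (Metric.ball_mem_nhds _ (by positivity))
      have hsubt : Subtype.val ⁻¹' (⋂ x ∈ F, {g : X → ℝ | |g x - f.1 x| < 1 / (k + 1 : ℝ)})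
          ∈ 𝓝 f := continuous_subtype_val.continuousAt.preimage_mem_nhds hnhds
      obtain ⟨h, hh1, hh2⟩ := mem_closure_iff_nhds.mp hf _ hsubt
      refine ⟨{ x | |h.1 x - f.1 x| < 1 / (k + 1 : ℝ) }, ⟨h, hh2, rfl⟩, ?_⟩
      intro x hx
      have := Set.mem_preimage.mp hh1
      simp only [Set.mem_iInter] at this
      exact this x hx
    obtain ⟨u, hu1, hu2⟩ := gamma_seq hγ α hopen hcov
    choose h hA hEq using hu1
    refine ⟨h, hA, ?_⟩
    rw [tendsto_subtype_rng, tendsto_pi_nhds]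
    intro x
    rw [Metric.tendsto_nhds]
    intro ε hε
    obtain ⟨K, hK⟩ := exists_nat_one_div_lt hε
    filter_upwards [hu2 x, eventually_ge_atTop K] with k hk1 hk2
    rw [hEq k] at hk1
    rw [Real.dist_eq]
    calc |(h k).1 x - f.1 x| < 1 / (k + 1 : ℝ) := hk1
      _ ≤ 1 / (K + 1 : ℝ) := by
          apply one_div_le_one_div_of_le
          · positivity
          · exact_mod_cast Nat.add_le_add_right hk2 1
      _ < ε := hK
end

section
/- Assuming 𝔭 > ω₁: the product ℝ^{ω₁} with the product topology is strongly sequentially separable, and hence B₁(D(ω₁)) for the discrete space of size ω₁ is strongly sequentially separable, but ℝ^{ω₁} is not Fréchet–Urysohn. -/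
open Set Filter Topology TopologicalSpace

/-- The strong finite intersection property: every finite subfamily has infinite
intersection. -/
def HasSFIP (F : Set (Set ℕ)) : Prop :=
  ∀ G : Finset (Set ℕ), ↑G ⊆ F → (⋂₀ (G : Set (Set ℕ))).Infinite

/-- `A` is a pseudo-intersection of `F`: `A` is infinite and almost contained in every
member of `F`. -/
def HasPseudoIntersection (F : Set (Set ℕ)) : Prop :=
  ∃ A : Set ℕ, A.Infinite ∧ ∀ S ∈ F, (A \ S).Finite

/-- `𝔭 > ω₁`: every family of at most `ℵ₁` infinite subsets of `ℕ` with the strong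
finite intersection property has an infinite pseudo-intersection. -/
def PGreaterThanOmegaOne : Prop :=
  ∀ F : Set (Set ℕ), (∀ S ∈ F, S.Infinite) → HasSFIP F →
    Cardinal.mk F ≤ Cardinal.aleph 1 → HasPseudoIntersection F

/-- Every nonempty open set in `ℝ^ι` (with `ι` nonempty) is infinite. -/
lemma aux_open_infinite {ι : Type} [Nonempty ι] {U : Set (ι → ℝ)} (hU : IsOpen U)
    {x : ι → ℝ} (hx : x ∈ U) : U.Infinite := by
  obtain ⟨i₀⟩ := ‹Nonempty ι›
  set φ : ℝ → (ι → ℝ) := fun r i => x i + r with hφ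
  have hcont : Continuous φ := continuous_pi fun i => continuous_const.add continuous_id
  have hinj : Function.Injective φ := by
    intro r s h
    have := congrFun h i₀
    simpa [hφ] using this
  have hφ0 : φ 0 = x := funext fun i => add_zero _
  have h0 : (0 : ℝ) ∈ φ ⁻¹' U := by rw [Set.mem_preimage, hφ0]; exact hx
  have hopen : IsOpen (φ ⁻¹' U) := hU.preimage hcont
  obtain ⟨ε, hε, hball⟩ := Metric.isOpen_iff.1 hopen 0 h0
  have hIoo : (Set.Ioo (0 - ε) (0 + ε)).Infinite := Set.Ioo_infinite (by linarith)
  have hpre : (φ ⁻¹' U).Infinite := by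
    refine hIoo.mono ?_
    rw [← Real.ball_eq_Ioo]; exact hball
  have himg : (φ '' (φ ⁻¹' U)).Infinite :=
    (Set.infinite_image_iff hinj.injOn).mpr hpre
  exact himg.mono (Set.image_preimage_subset φ U)

/-- A dense set meets every nonempty open set of `ℝ^ι` in an infinite set. -/
lemma aux_dense_inter_infinite {ι : Type} [Nonempty ι] {D : Set (ι → ℝ)} (hD : Dense D)
    {U : Set (ι → ℝ)} (hU : IsOpen U) {x : ι → ℝ} (hx : x ∈ U) : (U ∩ D).Infinite := by
  intro hfin
  have hclosed : IsClosed (U ∩ D) := hfin.isClosed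
  have hW : IsOpen (U \ (U ∩ D)) := hU.sdiff hclosed
  by_cases hne : (U \ (U ∩ D)).Nonempty
  · obtain ⟨g, hgD, hgW⟩ := hD.exists_mem_open hW hne
    exact hgW.2 ⟨hgW.1, hgD⟩
  · rw [Set.not_nonempty_iff_eq_empty, Set.diff_eq_empty] at hne
    exact (aux_open_infinite hU hx) (hfin.subset hne)

/-- Under `𝔭 > ω₁`, the product `ℝ^{ω₁}` (which coincides with `B₁` of the discrete
space of size `ω₁`, since every function on a discrete space is continuous) is strongly
sequentially separable, yet it is not Fréchet–Urysohn. -/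
theorem rPowOmegaOne_stronglySeqSeparable_not_frechetUrysohn
    (hp : PGreaterThanOmegaOne) (ι : Type) (hι : Cardinal.mk ι = Cardinal.aleph 1) :
    StronglySeqSeparable (ι → ℝ) ∧
    (∀ f : ι → ℝ, ∃ g : ℕ → ι → ℝ,
      (∀ n, Continuous[⊥, _] (g n)) ∧
      ∀ x, Tendsto (fun n => g n x) atTop (𝓝 (f x))) ∧
    ¬ FrechetUrysohnSpace (ι → ℝ) := by
  classical
  haveI hinf : Infinite ι := by
    rw [Cardinal.infinite_iff, hι]; exact Cardinal.aleph0_le_aleph 1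
  have huncount : ¬ Countable ι := by
    intro h
    have h1 : Cardinal.mk ι ≤ Cardinal.aleph0 := Cardinal.mk_le_aleph0_iff.mpr h
    rw [hι] at h1
    exact absurd h1 (not_le.mpr Cardinal.aleph0_lt_aleph_one)
  refine ⟨⟨?_, ?_⟩, ?_, ?_⟩
  · -- separability
    have hcard : Cardinal.mk ι ≤ Cardinal.mk (ℕ → Bool) := by
      have h2 : Cardinal.mk (ℕ → Bool) = Cardinal.continuum := by
        rw [← Cardinal.power_def, Cardinal.mk_bool, Cardinal.mk_nat, Cardinal.two_power_aleph0]
      rw [hι, h2]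
      exact Cardinal.aleph_one_le_continuum
    obtain ⟨e⟩ := (Cardinal.le_def ι (ℕ → Bool)).mp hcard
    -- separating level for a finite set of indices
    have hsep : ∀ F : Finset ι, ∃ n : ℕ, ∀ i ∈ F, ∀ i' ∈ F,
        (∀ j < n, e i j = e i' j) → i = i' := by
      intro F
      have key : ∀ p : ι × ι, ∃ m : ℕ, e p.1 ≠ e p.2 → e p.1 m ≠ e p.2 m := by
        intro p
        by_cases h : e p.1 = e p.2
        · exact ⟨0, fun hc => absurd h hc⟩
        · obtain ⟨j, hj⟩ := Function.ne_iff.mp h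
          exact ⟨j, fun _ => hj⟩
      choose m hm using key
      refine ⟨((F ×ˢ F).sup m) + 1, ?_⟩
      intro i hi i' hi' hagree
      by_contra hne
      have hEne : e i ≠ e i' := fun h => hne (e.injective h)
      have hmem : (i, i') ∈ F ×ˢ F := Finset.mem_product.mpr ⟨hi, hi'⟩
      have hlt : m (i, i') < (F ×ˢ F).sup m + 1 := Nat.lt_succ_of_le (Finset.le_sup hmem)
      exact hm (i, i') hEne (hagree _ hlt)
    let ψ : (Σ n : ℕ, (Fin n → Bool) → ℚ) → (ι → ℝ) :=
      fun p i => ((p.2 (fun j : Fin p.1 => e i (j : ℕ)) : ℚ) : ℝ)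
    refine ⟨Set.range ψ, Set.countable_range ψ, ?_⟩
    rw [dense_iff_inter_open]
    rintro U hU ⟨f, hf⟩
    obtain ⟨I, u, hu, hsub⟩ := isOpen_pi_iff.1 hU f hf
    have hball : ∀ i ∈ I, ∃ ε > 0, Metric.ball (f i) ε ⊆ u i := fun i hi =>
      Metric.isOpen_iff.1 (hu i hi).1 (f i) (hu i hi).2
    choose! ε hε hballs using hball
    obtain ⟨n, hn⟩ := hsep I
    have happrox : ∀ i ∈ I, ∃ q : ℚ, |f i - q| < ε i := fun i hi =>
      exists_rat_near (f i) (hε i hi)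
    choose! q hq using happrox
    set v : (Fin n → Bool) → ℚ :=
      fun b => (I.filter (fun i' => (fun j : Fin n => e i' (j : ℕ)) = b)).sum q with hv
    refine ⟨ψ ⟨n, v⟩, ?_, Set.mem_range_self _⟩
    apply hsub
    rw [Set.mem_pi]
    intro i hi
    have hfilter : I.filter (fun i' => (fun j : Fin n => e i' (j : ℕ))
        = (fun j : Fin n => e i (j : ℕ))) = {i} := by
      apply Finset.eq_singleton_iff_unique_mem.mpr
      refine ⟨Finset.mem_filter.mpr ⟨hi, rfl⟩, ?_⟩
      intro x hx
      obtain ⟨hxI, hxe⟩ := Finset.mem_filter.mp hx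
      exact hn x hxI i hi (fun j hj => congrFun hxe ⟨j, hj⟩)
    have hvi : v (fun j : Fin n => e i (j : ℕ)) = q i := by
      have hbeta : v (fun j : Fin n => e i (j : ℕ))
          = (I.filter (fun i' => (fun j : Fin n => e i' (j : ℕ))
            = (fun j : Fin n => e i (j : ℕ)))).sum q := rfl
      rw [hbeta, hfilter, Finset.sum_singleton]
    have : ψ ⟨n, v⟩ i = ((q i : ℚ) : ℝ) := by
      show ((v (fun j : Fin n => e i (j : ℕ)) : ℚ) : ℝ) = ((q i : ℚ) : ℝ)
      rw [hvi]
    rw [this]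
    apply hballs i hi
    rw [Metric.mem_ball, Real.dist_eq, abs_sub_comm]
    exact hq i hi
  · -- sequential density of any countable dense set
    intro D hDc hDd x
    have hne : D.Nonempty := hDd.nonempty
    obtain ⟨d, hd⟩ := hDc.exists_eq_range hne
    let S : Finset ι × ℕ → Set ℕ :=
      fun p => {n | ∀ i ∈ p.1, |d n i - x i| < 1 / (p.2 + 1)}
    have hSinf : ∀ p, (S p).Infinite := by
      intro p
      set U : Set (ι → ℝ) := {g | ∀ i ∈ p.1, |g i - x i| < 1 / (p.2 + 1)} with hUdef
      have hUopen : IsOpen U := by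
        have hUeq : U = ⋂ i ∈ p.1, {g : ι → ℝ | |g i - x i| < 1 / (p.2 + 1)} := by
          ext g; simp [hUdef]
        rw [hUeq]
        apply isOpen_biInter_finset
        intro i _
        exact isOpen_lt (((continuous_apply i).sub continuous_const).abs) continuous_const
      have hxU : x ∈ U := by
        intro i _
        simp only [sub_self, abs_zero]
        positivity
      have hinter := aux_dense_inter_infinite hDd hUopen hxU
      have hsub : U ∩ D ⊆ d '' (S p) := by
        rintro g ⟨hgU, hgD⟩
        rw [hd] at hgD
        obtain ⟨n, rfl⟩ := hgD
        exact ⟨n, hgU, rfl⟩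
      exact Set.Infinite.of_image d (hinter.mono hsub)
    have hSFIP : HasSFIP (Set.range S) := by
      intro G hG
      let c : Set ℕ → Finset ι × ℕ :=
        fun T => if h : T ∈ Set.range S then h.choose else (∅, 0)
      have hc : ∀ T ∈ G, S (c T) = T := by
        intro T hT
        have h : T ∈ Set.range S := hG hT
        simp only [c, dif_pos h]
        exact h.choose_spec
      have hsub : S (G.sup fun T => (c T).1, G.sup fun T => (c T).2)
          ⊆ ⋂₀ (G : Set (Set ℕ)) := by
        intro nn hnn
        rw [Set.mem_sInter]
        intro T hT
        have hTG : T ∈ G := hT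
        rw [← hc T hTG]
        intro i hi
        have hiF : i ∈ G.sup fun T => (c T).1 :=
          (Finset.le_sup (f := fun T => (c T).1) hTG) hi
        have hk : (c T).2 ≤ G.sup fun T => (c T).2 :=
          Finset.le_sup (f := fun T => (c T).2) hTG
        have h1 := hnn i hiF
        calc |d nn i - x i| < 1 / ((G.sup fun T => (c T).2) + 1) := h1
          _ ≤ 1 / ((c T).2 + 1) := by
              apply one_div_le_one_div_of_le
              · positivity
              · exact_mod_cast (by omega : (c T).2 + 1 ≤ (G.sup fun T => (c T).2) + 1)
      exact (hSinf _).mono hsub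
    have hcard2 : Cardinal.mk (Set.range S) ≤ Cardinal.aleph 1 := by
      have h1 : Cardinal.mk (Set.range S) ≤ Cardinal.mk (Finset ι × ℕ) := Cardinal.mk_range_le
      have h2 : Cardinal.mk (Finset ι × ℕ) = Cardinal.aleph 1 := by
        rw [Cardinal.mk_prod, Cardinal.lift_id, Cardinal.lift_id,
          Cardinal.mk_finset_of_infinite, hι, Cardinal.mk_nat,
          Cardinal.mul_eq_max (Cardinal.aleph0_le_aleph 1) le_rfl,
          max_eq_left (Cardinal.aleph0_le_aleph 1)]
      exact h2 ▸ h1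
    obtain ⟨A, hAinf, hAsub⟩ := hp _ (by rintro T ⟨p, rfl⟩; exact hSinf p) hSFIP hcard2
    have hch : ∀ mm : ℕ, ∃ a ∈ A, mm < a := fun mm => hAinf.exists_gt mm
    choose a ha hma using hch
    refine ⟨fun mm => d (a mm), fun mm => by rw [hd]; exact ⟨a mm, rfl⟩, ?_⟩
    rw [tendsto_pi_nhds]
    intro i
    rw [Metric.tendsto_atTop]
    intro εε hεε
    obtain ⟨k, hk⟩ := exists_nat_one_div_lt hεε
    have hfin : (A \ S ({i}, k)).Finite := hAsub _ ⟨({i}, k), rfl⟩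
    obtain ⟨N, hN⟩ := hfin.bddAbove
    refine ⟨N + 1, fun mm hmm => ?_⟩
    have hmem : a mm ∈ S ({i}, k) := by
      by_contra hcon
      have h1 : a mm ∈ A \ S ({i}, k) := ⟨ha mm, hcon⟩
      have h2 := hN h1
      have h3 := hma mm
      omega
    have h1 := hmem i (Finset.mem_singleton_self i)
    rw [Real.dist_eq]
    calc |d (a mm) i - x i| < 1 / ((k : ℝ) + 1) := h1
      _ < εε := hk
  · -- B₁ of the discrete space
    intro f
    exact ⟨fun _ => f, fun _ => continuous_bot, fun _ => tendsto_const_nhds⟩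
  · -- not Fréchet–Urysohn
    intro hFU
    set A : Set (ι → ℝ) := {f | (∀ i, f i = 0 ∨ f i = 1) ∧ {i | f i = 0}.Finite} with hA
    have hclos : (0 : ι → ℝ) ∈ closure A := by
      rw [mem_closure_iff]
      intro o ho h0
      obtain ⟨I, u, hu, hsub⟩ := isOpen_pi_iff.1 ho 0 h0
      refine ⟨fun i => if i ∈ I then 0 else 1, hsub ?_, ?_, ?_⟩
      · rw [Set.mem_pi]
        intro i hi
        rw [if_pos (Finset.mem_coe.mp hi)]
        simpa using (hu i (Finset.mem_coe.mp hi)).2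
      · intro i
        by_cases hi : i ∈ I <;> simp [hi]
      · apply Set.Finite.subset I.finite_toSet
        intro i hi
        simp only [Set.mem_setOf_eq] at hi
        by_contra hiI
        rw [Finset.mem_coe] at hiI
        rw [if_neg hiI] at hi
        exact one_ne_zero hi
    obtain ⟨w, hwA, hwlim⟩ := mem_closure_iff_seq_limit.mp hclos
    have hcnt : (⋃ nn, {i | w nn i = 0}).Countable :=
      Set.countable_iUnion (fun nn => ((hwA nn).2).countable)
    have hex : ∃ i, i ∉ ⋃ nn, {i | w nn i = 0} := by
      by_contra h
      push_neg at h
      have huniv : (Set.univ : Set ι).Countable :=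
        Set.Countable.mono (fun i _ => h i) hcnt
      exact huncount (Set.countable_univ_iff.mp huniv)
    obtain ⟨i, hi⟩ := hex
    have hone : ∀ nn, w nn i = 1 := by
      intro nn
      rcases (hwA nn).1 i with h0 | h1
      · exact absurd (Set.mem_iUnion.mpr ⟨nn, h0⟩) hi
      · exact h1
    have hlim0 : Tendsto (fun nn => w nn i) atTop (𝓝 (0 : ℝ)) := by
      have := tendsto_pi_nhds.mp hwlim i
      simpa using this
    have hlim1 : Tendsto (fun nn => w nn i) atTop (𝓝 (1 : ℝ)) := by
      simp only [hone]
      exact tendsto_const_nhds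
    exact one_ne_zero (tendsto_nhds_unique hlim1 hlim0)
end
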